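/- With U, V and ψ'_{UV} as above, define G'_{UV}(A) := ψ'_{UV}(A) − (1/2){ψ'_{UV}(1), A}. Then ‖G'_{UV}(A)‖ ≤ 3 ‖A‖ · ‖ψ'_{UU}(1)‖^{1/2} · ‖ψ'_{VV}(1)‖^{1/2} for all bounded A. -/

import Mathlib

open ContinuousLinearMap

private lemma aux_sq_hasSum {H : Type*} [NormedAddCommGroup H] [InnerProductSpace ℂ H]
    [CompleteSpace H] (U : ℕ → H →L[ℂ] H) (S : H →L[ℂ] H)
    (hU : ∀ x y : H,
      HasSum (fun j => (inner ℂ x ((adjoint (U j) ∘L U j) y) : ℂ)) (inner ℂ x (S y)))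
    (y : H) :
    HasSum (fun j => ‖U j y‖ ^ 2) (Complex.re (inner ℂ y (S y) : ℂ)) := by
  have h := (hU y y).mapL Complex.reCLM
  convert h using 2 with j
  simp only [Complex.reCLM_apply, ContinuousLinearMap.comp_apply,
    ContinuousLinearMap.adjoint_inner_right]
  rw [← @inner_self_eq_norm_sq ℂ]
  rfl
  exact (Complex.reCLM_apply _).symm

private lemma aux_opNorm_le {H : Type*} [NormedAddCommGroup H] [InnerProductSpace ℂ H]
    [CompleteSpace H]
    (U V : ℕ → H →L[ℂ] H) (SU SV B T : H →L[ℂ] H)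
    (hU : ∀ x y : H,
      HasSum (fun j => (inner ℂ x ((adjoint (U j) ∘L U j) y) : ℂ)) (inner ℂ x (SU y)))
    (hV : ∀ x y : H,
      HasSum (fun j => (inner ℂ x ((adjoint (V j) ∘L V j) y) : ℂ)) (inner ℂ x (SV y)))
    (hT : ∀ x y : H,
      HasSum (fun j => (inner ℂ x ((adjoint (V j) ∘L B ∘L U j) y) : ℂ)) (inner ℂ x (T y))) :
    ‖T‖ ≤ ‖B‖ * (Real.sqrt ‖SU‖ * Real.sqrt ‖SV‖) := by
  have hc : 0 ≤ ‖B‖ * (Real.sqrt ‖SU‖ * Real.sqrt ‖SV‖) :=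
    mul_nonneg (norm_nonneg _) (mul_nonneg (Real.sqrt_nonneg _) (Real.sqrt_nonneg _))
  -- key pointwise bound on the sesquilinear form
  have key : ∀ x y : H, ‖(inner ℂ x (T y) : ℂ)‖ ≤
      (‖B‖ * (Real.sqrt ‖SU‖ * Real.sqrt ‖SV‖)) * ‖y‖ * ‖x‖ := by
    intro x y
    set a : ℕ → ℝ := fun j => ‖U j y‖ with ha_def
    set b : ℕ → ℝ := fun j => ‖V j x‖ with hb_def
    have ha : HasSum (fun j => a j ^ 2) (Complex.re (inner ℂ y (SU y) : ℂ)) :=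
      aux_sq_hasSum U SU hU y
    have hb : HasSum (fun j => b j ^ 2) (Complex.re (inner ℂ x (SV x) : ℂ)) :=
      aux_sq_hasSum V SV hV x
    set α := Complex.re (inner ℂ y (SU y) : ℂ)
    set β := Complex.re (inner ℂ x (SV x) : ℂ)
    have hα : α ≤ ‖SU‖ * ‖y‖ ^ 2 := by
      calc α ≤ ‖(inner ℂ y (SU y) : ℂ)‖ := Complex.re_le_norm _
        _ ≤ ‖y‖ * ‖SU y‖ := norm_inner_le_norm _ _
        _ ≤ ‖y‖ * (‖SU‖ * ‖y‖) := by
            gcongr; exact le_opNorm SU y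
        _ = ‖SU‖ * ‖y‖ ^ 2 := by ring
    have hβ : β ≤ ‖SV‖ * ‖x‖ ^ 2 := by
      calc β ≤ ‖(inner ℂ x (SV x) : ℂ)‖ := Complex.re_le_norm _
        _ ≤ ‖x‖ * ‖SV x‖ := norm_inner_le_norm _ _
        _ ≤ ‖x‖ * (‖SV‖ * ‖x‖) := by gcongr; exact le_opNorm SV x
        _ = ‖SV‖ * ‖x‖ ^ 2 := by ring
    have hαnn : 0 ≤ α := ha.nonneg fun j => sq_nonneg _
    have hβnn : 0 ≤ β := hb.nonneg fun j => sq_nonneg _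
    -- summability of a*b
    have hab : Summable (fun j => a j * b j) := by
      apply Summable.of_nonneg_of_le
        (fun j => mul_nonneg (norm_nonneg _) (norm_nonneg _))
        (fun j => ?_) ((ha.summable.add hb.summable))
      nlinarith [sq_nonneg (a j - b j)]
    -- Cauchy–Schwarz on the tsum
    have htsum : (∑' j, a j * b j) ≤ Real.sqrt α * Real.sqrt β := by
      rw [← Real.sqrt_mul hαnn]
      apply Summable.tsum_le_of_sum_le hab
      intro s
      have cs := Finset.sum_mul_sq_le_sq_mul_sq s a b
      have h1 : ∑ j ∈ s, a j ^ 2 ≤ α := sum_le_hasSum s (fun j _ => sq_nonneg _) ha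
      have h2 : ∑ j ∈ s, b j ^ 2 ≤ β := sum_le_hasSum s (fun j _ => sq_nonneg _) hb
      have hs : 0 ≤ ∑ j ∈ s, a j * b j :=
        Finset.sum_nonneg fun j _ => mul_nonneg (norm_nonneg _) (norm_nonneg _)
      have : (∑ j ∈ s, a j * b j) ^ 2 ≤ α * β := by
        refine cs.trans ?_
        have hsa : 0 ≤ ∑ j ∈ s, a j ^ 2 := Finset.sum_nonneg fun j _ => sq_nonneg _
        exact mul_le_mul h1 h2 (Finset.sum_nonneg fun j _ => sq_nonneg _) hαnn
      calc ∑ j ∈ s, a j * b j = Real.sqrt ((∑ j ∈ s, a j * b j) ^ 2) :=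
            (Real.sqrt_sq hs).symm
        _ ≤ Real.sqrt (α * β) := Real.sqrt_le_sqrt this
    -- norm bound on each term
    have hterm : ∀ j, ‖(inner ℂ x ((adjoint (V j) ∘L B ∘L U j) y) : ℂ)‖ ≤
        ‖B‖ * (a j * b j) := by
      intro j
      have : (inner ℂ x ((adjoint (V j) ∘L B ∘L U j) y) : ℂ) =
          inner ℂ (V j x) (B (U j y)) := by
        simp [ContinuousLinearMap.comp_apply, ContinuousLinearMap.adjoint_inner_right]
      rw [this]
      calc ‖(inner ℂ (V j x) (B (U j y)) : ℂ)‖ ≤ ‖V j x‖ * ‖B (U j y)‖ :=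
            norm_inner_le_norm _ _
        _ ≤ ‖V j x‖ * (‖B‖ * ‖U j y‖) := by gcongr; exact le_opNorm B _
        _ = ‖B‖ * (a j * b j) := by ring
    have hsummnorm : Summable (fun j => ‖(inner ℂ x ((adjoint (V j) ∘L B ∘L U j) y) : ℂ)‖) :=
      Summable.of_nonneg_of_le (fun j => norm_nonneg _) hterm (hab.mul_left ‖B‖)
    calc ‖(inner ℂ x (T y) : ℂ)‖ = ‖∑' j, (inner ℂ x ((adjoint (V j) ∘L B ∘L U j) y) : ℂ)‖ := by
          rw [(hT x y).tsum_eq]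
      _ ≤ ∑' j, ‖(inner ℂ x ((adjoint (V j) ∘L B ∘L U j) y) : ℂ)‖ :=
          norm_tsum_le_tsum_norm hsummnorm
      _ ≤ ∑' j, ‖B‖ * (a j * b j) :=
          Summable.tsum_le_tsum hterm hsummnorm (hab.mul_left ‖B‖)
      _ = ‖B‖ * ∑' j, a j * b j := by rw [tsum_mul_left]
      _ ≤ ‖B‖ * (Real.sqrt α * Real.sqrt β) := by
          gcongr
      _ ≤ ‖B‖ * (Real.sqrt (‖SU‖ * ‖y‖ ^ 2) * Real.sqrt (‖SV‖ * ‖x‖ ^ 2)) := by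
          have g1 := Real.sqrt_le_sqrt hα
          have g2 := Real.sqrt_le_sqrt hβ
          gcongr
      _ = ‖B‖ * (Real.sqrt ‖SU‖ * Real.sqrt ‖SV‖) * ‖y‖ * ‖x‖ := by
          rw [Real.sqrt_mul (norm_nonneg SU), Real.sqrt_mul (norm_nonneg SV),
            Real.sqrt_sq (norm_nonneg y), Real.sqrt_sq (norm_nonneg x)]
          ring
  refine opNorm_le_bound T hc fun y => ?_
  have h := key (T y) y
  rw [@inner_self_eq_norm_sq_to_K ℂ] at h
  simp only [norm_pow, Complex.norm_real, RCLike.norm_ofReal, Real.norm_eq_abs,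
    abs_norm] at h
  rcases (norm_nonneg (T y)).eq_or_lt with h0 | h0
  · rw [← h0]; positivity
  · have := le_of_mul_le_mul_right (by calc ‖T y‖ * ‖T y‖ = ‖T y‖ ^ 2 := by ring
      _ ≤ ‖B‖ * (Real.sqrt ‖SU‖ * Real.sqrt ‖SV‖) * ‖y‖ * ‖T y‖ := h) h0
    linarith

/-- With `ψ'_{UV}(A) = Σⱼ Vⱼ* A Uⱼ` and
`G'_{UV}(A) = ψ'_{UV}(A) − ½{ψ'_{UV}(1), A}`, one has
`‖G'_{UV}(A)‖ ≤ 3 ‖A‖ ‖ψ'_{UU}(1)‖^{1/2} ‖ψ'_{VV}(1)‖^{1/2}`.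
Here `SU = ψ'_{UU}(1)`, `SV = ψ'_{VV}(1)`, `ψA = ψ'_{UV}(A)` and
`ψ1 = ψ'_{UV}(1)` are the weak limits of the corresponding series. -/
theorem opNorm_subCompletelyPositive_lindblad_le
    {H : Type*} [NormedAddCommGroup H] [InnerProductSpace ℂ H] [CompleteSpace H]
    (U V : ℕ → H →L[ℂ] H) (SU SV : H →L[ℂ] H) (A ψA ψ1 : H →L[ℂ] H)
    (hU : ∀ x y : H,
      HasSum (fun j => (inner ℂ x ((adjoint (U j) ∘L U j) y) : ℂ)) (inner ℂ x (SU y)))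
    (hV : ∀ x y : H,
      HasSum (fun j => (inner ℂ x ((adjoint (V j) ∘L V j) y) : ℂ)) (inner ℂ x (SV y)))
    (hψA : ∀ x y : H,
      HasSum (fun j => (inner ℂ x ((adjoint (V j) ∘L A ∘L U j) y) : ℂ)) (inner ℂ x (ψA y)))
    (hψ1 : ∀ x y : H,
      HasSum (fun j => (inner ℂ x ((adjoint (V j) ∘L U j) y) : ℂ)) (inner ℂ x (ψ1 y))) :
    ‖ψA - (2⁻¹ : ℂ) • (ψ1 * A + A * ψ1)‖ ≤
      3 * ‖A‖ * Real.sqrt ‖SU‖ * Real.sqrt ‖SV‖ := by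
  set c := Real.sqrt ‖SU‖ * Real.sqrt ‖SV‖ with hc_def
  have hc : 0 ≤ c := mul_nonneg (Real.sqrt_nonneg _) (Real.sqrt_nonneg _)
  have hA : ‖ψA‖ ≤ ‖A‖ * c := aux_opNorm_le U V SU SV A ψA hU hV hψA
  have h1 : ‖ψ1‖ ≤ ‖(1 : H →L[ℂ] H)‖ * c := by
    apply aux_opNorm_le U V SU SV 1 ψ1 hU hV
    intro x y
    simpa using hψ1 x y
  have h1' : ‖ψ1‖ ≤ c := by
    refine h1.trans ?_
    have hone : ‖(1 : H →L[ℂ] H)‖ ≤ 1 := by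
      rw [ContinuousLinearMap.one_def]; exact norm_id_le
    calc ‖(1 : H →L[ℂ] H)‖ * c ≤ 1 * c := by gcongr
      _ = c := one_mul c
  have hnorm2 : ‖(2⁻¹ : ℂ)‖ = 2⁻¹ := by norm_num
  calc ‖ψA - (2⁻¹ : ℂ) • (ψ1 * A + A * ψ1)‖
      ≤ ‖ψA‖ + ‖(2⁻¹ : ℂ) • (ψ1 * A + A * ψ1)‖ := norm_sub_le _ _
    _ = ‖ψA‖ + 2⁻¹ * ‖ψ1 * A + A * ψ1‖ := by rw [norm_smul, hnorm2]
    _ ≤ ‖ψA‖ + 2⁻¹ * (‖ψ1 * A‖ + ‖A * ψ1‖) := by gcongr; exact norm_add_le _ _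
    _ ≤ ‖ψA‖ + 2⁻¹ * (‖ψ1‖ * ‖A‖ + ‖A‖ * ‖ψ1‖) := by
        gcongr <;> exact norm_mul_le _ _
    _ ≤ ‖A‖ * c + 2⁻¹ * (c * ‖A‖ + ‖A‖ * c) := by
        have := hA; have := h1'; gcongr
    _ = 2 * ‖A‖ * c := by ring
    _ ≤ 3 * ‖A‖ * c := by nlinarith [norm_nonneg A, hc]
    _ = 3 * ‖A‖ * Real.sqrt ‖SU‖ * Real.sqrt ‖SV‖ := by rw [hc_def]; ring
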